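/- Let the setting of the pH-OpInf-DEIM state error bound hold: Φ ∈ ℝⁿˣʳ with ΦᵀΦ = I_r; H(x) = (1/2)xᵀQx + cᵀh(x) with Q symmetric, ∇H(x) = Qx + J_h(x)ᵀc, ∇H and J_h Lipschitz with constants C_Lip[∇H] and C_Lip[J_h]; ℙ = Ψ(PᵀΨ)⁻¹Pᵀ with Ψ having orthonormal columns and P a selection matrix; D_r ∈ ℝʳˣʳ, B_r ∈ ℝʳˣᵐ, Q_r = ΦᵀQΦ. Let x: [0,T] → ℝⁿ be continuously differentiable, u, d continuous, and x_r: [0,T] → ℝʳ continuously differentiable with ẋ_r(t) = D_r(Q_r x_r(t) + Φᵀ J_h(Φ x_r(t))ᵀ ℙᵀ c) + B_r u(t). Define θ(t) := ΦΦᵀx(t) − Φx_r(t), ρ(t) := x(t) − ΦΦᵀx(t), ζ(t) := ẋ(t) − d(t), η(t) := Φᵀd(t) − D_rΦᵀ∇H(x(t)) − B_r u(t), ξ(t) := (I − ℙ)J_h(ΦΦᵀx(t))Φ, C₁ := μ(Φ D_r Φᵀ Q) + ‖D_rΦᵀ‖·C_Lip[J_h]·‖(PᵀΨ)⁻¹‖·‖c‖,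 C₂ := ‖D_rΦᵀ‖·C_Lip[∇H], C₃ := ‖D_r‖·‖c‖. Then at every time t where θ(t) ≠ 0, the function t ↦ ‖θ(t)‖ is differentiable and satisfies d/dt ‖θ(t)‖ ≤ C₁‖θ(t)‖ + C₂‖ρ(t)‖ + C₃‖ξ(t)‖ + ‖ζ(t)‖ + ‖η(t)‖. -/

import Mathlib

/-!
Since `‖θ‖' = ⟪θ, θ'⟫ / ‖θ‖` away from zeros of `θ`, it suffices to bound `⟪θ, θ'⟫`.
Subtracting the reduced dynamics from the projected data splits `θ'` as
`Φ D_r Φᵀ Q θ + Φ e`: the first part contributes at most `μ(Φ D_r Φᵀ Q) ‖θ‖²`, and as `Φ` is an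
isometry, `‖Φ e‖ = ‖e‖` is bounded term by term by the Lipschitz constants of `∇H` and `J_h`,
by `‖ℙᵀ c‖ ≤ ‖(PᵀΨ)⁻¹‖ ‖c‖` (both `Ψ` and the selection matrix `P` have orthonormal columns),
and by `‖Φᵀ‖ ≤ 1`.
-/

open Matrix MeasureTheory RealInnerProductSpace

noncomputable section

/-- Euclidean space `ℝⁿ`. -/
abbrev Evec (n : ℕ) := EuclideanSpace ℝ (Fin n)

/-- Matrix-vector product on Euclidean spaces. -/
def mv {a b : ℕ} (M : Matrix (Fin a) (Fin b) ℝ) (v : Evec b) : Evec a := WithLp.toLp 2 (M.mulVec v)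

/-- Spectral (operator) norm of a real matrix, viewed as a linear map between
Euclidean spaces. -/
def spec {a b : ℕ} (M : Matrix (Fin a) (Fin b) ℝ) : ℝ :=
  ‖LinearMap.toContinuousLinearMap (Matrix.toEuclideanLin M)‖

/-- Logarithmic norm `μ(A) = sup_{v ≠ 0} ⟪v, A v⟫ / ⟪v, v⟫` of a real square matrix. -/
def logNorm {a : ℕ} (A : Matrix (Fin a) (Fin a) ℝ) : ℝ :=
  sSup {s : ℝ | ∃ v : Evec a, v ≠ 0 ∧ s = ⟪v, mv A v⟫ / ⟪v, v⟫}

theorem mv_eq_toEuclideanLin {a b : ℕ} (M : Matrix (Fin a) (Fin b) ℝ) (v : Evec b) :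
    mv M v = Matrix.toEuclideanLin M v := rfl

theorem mv_add {a b : ℕ} (M : Matrix (Fin a) (Fin b) ℝ) (v w : Evec b) :
    mv M (v + w) = mv M v + mv M w := map_add (toEuclideanLin M) v w

theorem mv_sub {a b : ℕ} (M : Matrix (Fin a) (Fin b) ℝ) (v w : Evec b) :
    mv M (v - w) = mv M v - mv M w := map_sub (toEuclideanLin M) v w

theorem sub_mv {a b : ℕ} (M N : Matrix (Fin a) (Fin b) ℝ) (v : Evec b) :
    mv (M - N) v = mv M v - mv N v := by
  simp only [mv_eq_toEuclideanLin, map_sub, LinearMap.sub_apply]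

theorem mv_one {a : ℕ} (v : Evec a) : mv (1 : Matrix (Fin a) (Fin a) ℝ) v = v := by
  simp only [mv, one_mulVec, WithLp.toLp_ofLp]

theorem mv_mv {a b e : ℕ} (M : Matrix (Fin a) (Fin b) ℝ) (N : Matrix (Fin b) (Fin e) ℝ)
    (v : Evec e) : mv (M * N) v = mv M (mv N v) := by
  simp only [mv, mulVec_mulVec, WithLp.ofLp_toLp]

theorem hasDerivAt_mv {a b : ℕ} (M : Matrix (Fin a) (Fin b) ℝ) {f : ℝ → Evec b} {f' : Evec b}
    {t : ℝ} (hf : HasDerivAt f f' t) : HasDerivAt (fun s => mv M (f s)) (mv M f') t :=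
  (LinearMap.toContinuousLinearMap (toEuclideanLin M)).hasFDerivAt.comp_hasDerivAt t hf

theorem inner_mv_transpose {a b : ℕ} (M : Matrix (Fin a) (Fin b) ℝ) (u : Evec a) (v : Evec b) :
    ⟪mv Mᵀ u, v⟫ = ⟪u, mv M v⟫ := by
  rw [mv_eq_toEuclideanLin, mv_eq_toEuclideanLin, ← conjTranspose_eq_transpose_of_trivial,
    toEuclideanLin_conjTranspose_eq_adjoint, LinearMap.adjoint_inner_left]

theorem spec_nonneg {a b : ℕ} (M : Matrix (Fin a) (Fin b) ℝ) : 0 ≤ spec M := norm_nonneg _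

theorem norm_mv_le {a b : ℕ} (M : Matrix (Fin a) (Fin b) ℝ) (v : Evec b) :
    ‖mv M v‖ ≤ spec M * ‖v‖ :=
  (LinearMap.toContinuousLinearMap (toEuclideanLin M)).le_opNorm v

theorem norm_mv_le_of_le {a b : ℕ} (M : Matrix (Fin a) (Fin b) ℝ) {v : Evec b} {β : ℝ}
    (hv : ‖v‖ ≤ β) : ‖mv M v‖ ≤ spec M * β :=
  (norm_mv_le M v).trans (mul_le_mul_of_nonneg_left hv (spec_nonneg M))

section
open scoped Matrix.Norms.L2Operator

theorem spec_eq_l2_opNorm {a b : ℕ} (M : Matrix (Fin a) (Fin b) ℝ) : spec M = ‖M‖ := rfl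

theorem spec_transpose {a b : ℕ} (M : Matrix (Fin a) (Fin b) ℝ) : spec Mᵀ = spec M := by
  rw [spec_eq_l2_opNorm, spec_eq_l2_opNorm, ← conjTranspose_eq_transpose_of_trivial,
    l2_opNorm_conjTranspose]

end

section Orthonormal

variable {a b : ℕ} {U : Matrix (Fin a) (Fin b) ℝ}

theorem norm_mv_of_transpose_mul_self (hU : Uᵀ * U = 1) (v : Evec b) : ‖mv U v‖ = ‖v‖ := by
  have h : ⟪mv U v, mv U v⟫ = ⟪v, v⟫ := by rw [← inner_mv_transpose, ← mv_mv, hU, mv_one]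
  rw [real_inner_self_eq_norm_sq, real_inner_self_eq_norm_sq] at h
  exact (pow_left_inj₀ (norm_nonneg _) (norm_nonneg _) two_ne_zero).1 h

theorem spec_le_one_of_transpose_mul_self (hU : Uᵀ * U = 1) : spec U ≤ 1 :=
  ContinuousLinearMap.opNorm_le_bound _ zero_le_one fun v =>
    (norm_mv_of_transpose_mul_self hU v).trans_le (one_mul _).ge

theorem norm_mv_transpose_le_of_transpose_mul_self (hU : Uᵀ * U = 1) (v : Evec a) :
    ‖mv Uᵀ v‖ ≤ ‖v‖ :=
  (norm_mv_le _ v).trans <| mul_le_of_le_one_left (norm_nonneg v) <|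
    (spec_transpose U).trans_le (spec_le_one_of_transpose_mul_self hU)

theorem transpose_mul_self_of_selection {℘ : Fin b → Fin a} (h℘ : Function.Injective ℘)
    (hU : ∀ i j, U i j = if i = ℘ j then 1 else 0) : Uᵀ * U = 1 := by
  ext j k
  rw [mul_apply, Finset.sum_eq_single (℘ j)]
  · simp [hU, one_apply, h℘.eq_iff]
  · intro i _ hi
    simp [hU, hi]
  · simp

end Orthonormal

theorem norm_mv_transpose_mul_mul_transpose_le {a k l : ℕ} {Ψ : Matrix (Fin a) (Fin k) ℝ}
    {V : Matrix (Fin a) (Fin l) ℝ} (hΨ : Ψᵀ * Ψ = 1) (hV : Vᵀ * V = 1)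
    (M : Matrix (Fin k) (Fin l) ℝ) (c : Evec a) : ‖mv (Ψ * M * Vᵀ)ᵀ c‖ ≤ spec M * ‖c‖ := by
  rw [transpose_mul, transpose_mul, transpose_transpose, mv_mv, mv_mv,
    norm_mv_of_transpose_mul_self hV, ← spec_transpose]
  exact norm_mv_le_of_le _ (norm_mv_transpose_le_of_transpose_mul_self hΨ c)

theorem inner_le_logNorm_mul {a : ℕ} (A : Matrix (Fin a) (Fin a) ℝ) {v : Evec a} (hv : v ≠ 0) :
    ⟪v, mv A v⟫ ≤ logNorm A * ‖v‖ ^ 2 := by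
  have hbdd : BddAbove {s : ℝ | ∃ w : Evec a, w ≠ 0 ∧ s = ⟪w, mv A w⟫ / ⟪w, w⟫} := by
    refine ⟨spec A, ?_⟩
    rintro _ ⟨w, hw, rfl⟩
    rw [div_le_iff₀ (real_inner_self_pos.2 hw), real_inner_self_eq_norm_sq]
    calc ⟪w, mv A w⟫ ≤ ‖w‖ * ‖mv A w‖ := real_inner_le_norm _ _
      _ ≤ ‖w‖ * (spec A * ‖w‖) := mul_le_mul_of_nonneg_left (norm_mv_le A w) (norm_nonneg w)
      _ = spec A * ‖w‖ ^ 2 := by ring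
  have h := le_csSup hbdd ⟨v, hv, rfl⟩
  rwa [div_le_iff₀ (real_inner_self_pos.2 hv), real_inner_self_eq_norm_sq] at h

theorem HasDerivAt.norm {F : Type*} [NormedAddCommGroup F] [InnerProductSpace ℝ F]
    {f : ℝ → F} {f' : F} {t : ℝ} (hf : HasDerivAt f f' t) (h0 : f t ≠ 0) :
    HasDerivAt (‖f ·‖) (⟪f t, f'⟫ / ‖f t‖) t := by
  have h := hf.norm_sq.sqrt (by positivity)
  simp only [Real.sqrt_sq (norm_nonneg _)] at h
  convert h using 1
  field_simp

theorem exists_hasDerivAt_norm_le_logNorm_mul_add {a : ℕ} {f : ℝ → Evec a} {t : ℝ}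
    {A : Matrix (Fin a) (Fin a) ℝ} {w : Evec a} (hf : HasDerivAt f (mv A (f t) + w) t)
    (h0 : f t ≠ 0) :
    ∃ D, HasDerivAt (‖f ·‖) D t ∧ D ≤ logNorm A * ‖f t‖ + ‖w‖ := by
  refine ⟨_, hf.norm h0, ?_⟩
  rw [div_le_iff₀ (norm_pos_iff.2 h0), inner_add_right]
  linear_combination inner_le_logNorm_mul A h0 + real_inner_le_norm (f t) w

section ErrorDynamics

variable {n r d m : ℕ} (Φ : Matrix (Fin n) (Fin r) ℝ) (Dr : Matrix (Fin r) (Fin r) ℝ)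
  (Jh : Evec n → Matrix (Fin d) (Fin n) ℝ) (gH : Evec n → Evec n) (c : Evec d)

theorem projected_error_derivative_eq (Q : Matrix (Fin n) (Fin n) ℝ)
    (Br : Matrix (Fin r) (Fin m) ℝ) (Pbb : Matrix (Fin d) (Fin d) ℝ)
    (hgH : ∀ p, gH p = mv Q p + mv (Jh p)ᵀ c)
    (x x' dx : Evec n) (u : Evec m) (xr : Evec r) :
    mv (Φ * Φᵀ) x' - mv Φ
        (mv Dr (mv (Φᵀ * Q * Φ) xr + mv Φᵀ (mv (Jh (mv Φ xr))ᵀ (mv Pbbᵀ c))) + mv Br u) =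
      mv (Φ * Dr * Φᵀ * Q) (mv Φ (mv Φᵀ x) - mv Φ xr) + mv Φ
        (mv (Dr * Φᵀ) (gH x - gH (mv Φ (mv Φᵀ x)))
          + mv Dr (mv ((1 - Pbb) * Jh (mv Φ (mv Φᵀ x)) * Φ)ᵀ c)
          + mv (Dr * Φᵀ) (mv (Jh (mv Φ (mv Φᵀ x)) - Jh (mv Φ xr))ᵀ (mv Pbbᵀ c))
          + mv Φᵀ (x' - dx)
          + (mv Φᵀ dx - mv Dr (mv Φᵀ (gH x)) - mv Br u)) := by
  simp only [hgH, transpose_mul, transpose_sub, transpose_one, mv_mv, mv_add, mv_sub, sub_mv,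
    mv_one]
  abel

theorem norm_residual_le {k : ℕ} (hΦ : Φᵀ * Φ = 1)
    {CLipH : ℝ} (hLipH : ∀ a b : Evec n, ‖gH a - gH b‖ ≤ CLipH * ‖a - b‖)
    {CLipJ : ℝ} (hLipJ : ∀ a b : Evec n, spec (Jh a - Jh b) ≤ CLipJ * ‖a - b‖)
    {Ψ P : Matrix (Fin d) (Fin k) ℝ} (hΨ : Ψᵀ * Ψ = 1) (hP : Pᵀ * P = 1)
    (M : Matrix (Fin k) (Fin k) ℝ) (x y z ζ : Evec n) (η : Evec r) (ξ : Matrix (Fin d) (Fin r) ℝ) :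
    ‖mv (Dr * Φᵀ) (gH x - gH y) + mv Dr (mv ξᵀ c)
        + mv (Dr * Φᵀ) (mv (Jh y - Jh z)ᵀ (mv (Ψ * M * Pᵀ)ᵀ c))
        + mv Φᵀ ζ + η‖ ≤
      spec (Dr * Φᵀ) * CLipH * ‖x - y‖ + spec Dr * ‖c‖ * spec ξ
        + spec (Dr * Φᵀ) * CLipJ * spec M * ‖c‖ * ‖y - z‖ + ‖ζ‖ + ‖η‖ := by
  have hJ : spec (Jh y - Jh z)ᵀ ≤ CLipJ * ‖y - z‖ := (spec_transpose _).trans_le (hLipJ y z)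
  have hgrad := norm_mv_le_of_le (Dr * Φᵀ) (hLipH x y)
  have hξ := norm_mv_le_of_le Dr ((norm_mv_le ξᵀ c).trans_eq (by rw [spec_transpose]))
  have hjac := norm_mv_le_of_le (Dr * Φᵀ) <| (norm_mv_le _ _).trans <|
    mul_le_mul hJ (norm_mv_transpose_mul_mul_transpose_le hΨ hP M c) (norm_nonneg _)
      ((spec_nonneg _).trans hJ)
  have hζ := norm_mv_transpose_le_of_transpose_mul_self hΦ ζ
  refine (norm_add_le _ _).trans ((add_le_add norm_add₄_le le_rfl).trans ?_)
  linear_combination hgrad + hξ + hjac + hζ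

end ErrorDynamics

theorem theta_norm_derivative_bound_general {n r d m m0 : ℕ}
    (T : ℝ)
    (Φ : Matrix (Fin n) (Fin r) ℝ) (hΦ : Φᵀ * Φ = 1)
    (Q : Matrix (Fin n) (Fin n) ℝ) (c : Evec d)
    (Jh : Evec n → Matrix (Fin d) (Fin n) ℝ)
    (gH : Evec n → Evec n) (hgH : ∀ p, gH p = mv Q p + mv (Jh p)ᵀ c)
    (CLipH : ℝ) (hLipH : ∀ a b : Evec n, ‖gH a - gH b‖ ≤ CLipH * ‖a - b‖)
    (CLipJ : ℝ) (hLipJ : ∀ a b : Evec n, spec (Jh a - Jh b) ≤ CLipJ * ‖a - b‖)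
    (Ψ P : Matrix (Fin d) (Fin m0) ℝ)
    (hΨ : Ψᵀ * Ψ = 1)
    (hP : ∃ ℘ : Fin m0 → Fin d, Function.Injective ℘ ∧
      ∀ i j, P i j = if i = ℘ j then 1 else 0)
    (Pbb : Matrix (Fin d) (Fin d) ℝ) (hPbb : Pbb = Ψ * (Pᵀ * Ψ)⁻¹ * Pᵀ)
    (Dr : Matrix (Fin r) (Fin r) ℝ) (Br : Matrix (Fin r) (Fin m) ℝ)
    (Qr : Matrix (Fin r) (Fin r) ℝ) (hQrdef : Qr = Φᵀ * Q * Φ)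
    (x x' : ℝ → Evec n)
    (hx : ∀ t ∈ Set.Icc (0 : ℝ) T, HasDerivAt x (x' t) t)
    (u : ℝ → Evec m)
    (dfun : ℝ → Evec n)
    (xr : ℝ → Evec r)
    (hxr : ∀ t ∈ Set.Icc (0 : ℝ) T, HasDerivAt xr
      (mv Dr (mv Qr (xr t) + mv Φᵀ (mv (Jh (mv Φ (xr t)))ᵀ (mv Pbbᵀ c))) + mv Br (u t)) t)
    (θ : ℝ → Evec n) (hθ : ∀ t, θ t = mv Φ (mv Φᵀ (x t)) - mv Φ (xr t))
    (ρ : ℝ → Evec n) (hρ : ∀ t, ρ t = x t - mv Φ (mv Φᵀ (x t)))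
    (ζ : ℝ → Evec n) (hζ : ∀ t, ζ t = x' t - dfun t)
    (η : ℝ → Evec r)
    (hη : ∀ t, η t = mv Φᵀ (dfun t) - mv Dr (mv Φᵀ (gH (x t))) - mv Br (u t))
    (ξ : ℝ → Matrix (Fin d) (Fin r) ℝ)
    (hξ : ∀ t, ξ t = (1 - Pbb) * Jh (mv Φ (mv Φᵀ (x t))) * Φ)
    (C₁ C₂ C₃ : ℝ)
    (hC₁ : C₁ = logNorm (Φ * Dr * Φᵀ * Q)
      + spec (Dr * Φᵀ) * CLipJ * spec ((Pᵀ * Ψ)⁻¹) * ‖c‖)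
    (hC₂ : C₂ = spec (Dr * Φᵀ) * CLipH)
    (hC₃ : C₃ = spec Dr * ‖c‖) :
    ∀ t ∈ Set.Icc (0 : ℝ) T, θ t ≠ 0 →
      ∃ D : ℝ, HasDerivAt (fun s => ‖θ s‖) D t ∧
        D ≤ C₁ * ‖θ t‖ + C₂ * ‖ρ t‖ + C₃ * spec (ξ t) + ‖ζ t‖ + ‖η t‖ := by
  intro t ht hθt
  obtain ⟨℘, h℘, hP℘⟩ := hP
  subst hQrdef hPbb hC₁ hC₂ hC₃
  have hθfun : θ = (fun s => mv (Φ * Φᵀ) (x s)) - fun s => mv Φ (xr s) :=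
    funext fun s => by rw [hθ, Pi.sub_apply, mv_mv]
  have hθ' := (hasDerivAt_mv (Φ * Φᵀ) (hx t ht)).sub (hasDerivAt_mv Φ (hxr t ht))
  rw [← hθfun, projected_error_derivative_eq Φ Dr Jh gH c Q Br _ hgH (x t) (x' t) (dfun t),
    ← hθ, ← hζ, ← hη, ← hξ] at hθ'
  obtain ⟨D, hD, hDle⟩ := exists_hasDerivAt_norm_le_logNorm_mul_add hθ' hθt
  have hres := norm_residual_le Φ Dr Jh gH c hΦ hLipH hLipJ hΨ
    (transpose_mul_self_of_selection h℘ hP℘) (Pᵀ * Ψ)⁻¹ (x t) (mv Φ (mv Φᵀ (x t))) (mv Φ (xr t))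
    (ζ t) (η t) (ξ t)
  rw [← hρ, ← hθ] at hres
  refine ⟨D, hD, hDle.trans ?_⟩
  rw [norm_mv_of_transpose_mul_self hΦ]
  linear_combination hres

/-- Differential inequality for the pH-OpInf-DEIM error
component `θ(t) = ΦΦᵀx(t) − Φx_r(t)`: at every time `t ∈ [0, T]` with
`θ(t) ≠ 0`, the function `t ↦ ‖θ(t)‖` is differentiable and
`d/dt ‖θ(t)‖ ≤ C₁‖θ(t)‖ + C₂‖ρ(t)‖ + C₃‖ξ(t)‖ + ‖ζ(t)‖ + ‖η(t)‖`. -/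
theorem theta_norm_derivative_bound {n r d m m0 : ℕ}
    (T : ℝ) (hT : 0 < T)
    (Φ : Matrix (Fin n) (Fin r) ℝ) (hΦ : Φᵀ * Φ = 1)
    (Q : Matrix (Fin n) (Fin n) ℝ) (hQ : Qᵀ = Q) (c : Evec d)
    (h : Evec n → Evec d) (Jh : Evec n → Matrix (Fin d) (Fin n) ℝ)
    (hJac : ∀ p, HasFDerivAt h
      (LinearMap.toContinuousLinearMap (Matrix.toEuclideanLin (Jh p))) p)
    (gH : Evec n → Evec n) (hgH : ∀ p, gH p = mv Q p + mv (Jh p)ᵀ c)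
    (CLipH : ℝ) (hLipH : ∀ a b : Evec n, ‖gH a - gH b‖ ≤ CLipH * ‖a - b‖)
    (CLipJ : ℝ) (hLipJ : ∀ a b : Evec n, spec (Jh a - Jh b) ≤ CLipJ * ‖a - b‖)
    (Ψ P : Matrix (Fin d) (Fin m0) ℝ)
    (hΨ : Ψᵀ * Ψ = 1)
    (hP : ∃ ℘ : Fin m0 → Fin d, Function.Injective ℘ ∧
      ∀ i j, P i j = if i = ℘ j then 1 else 0)
    (hPΨ : IsUnit (Pᵀ * Ψ))
    (Pbb : Matrix (Fin d) (Fin d) ℝ) (hPbb : Pbb = Ψ * (Pᵀ * Ψ)⁻¹ * Pᵀ)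
    (Dr : Matrix (Fin r) (Fin r) ℝ) (Br : Matrix (Fin r) (Fin m) ℝ)
    (Qr : Matrix (Fin r) (Fin r) ℝ) (hQrdef : Qr = Φᵀ * Q * Φ)
    (x x' : ℝ → Evec n)
    (hx : ∀ t ∈ Set.Icc (0 : ℝ) T, HasDerivAt x (x' t) t)
    (hx'c : ContinuousOn x' (Set.Icc (0 : ℝ) T))
    (u : ℝ → Evec m) (hu : ContinuousOn u (Set.Icc (0 : ℝ) T))
    (dfun : ℝ → Evec n) (hdfun : ContinuousOn dfun (Set.Icc (0 : ℝ) T))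
    (xr : ℝ → Evec r)
    (hxr : ∀ t ∈ Set.Icc (0 : ℝ) T, HasDerivAt xr
      (mv Dr (mv Qr (xr t) + mv Φᵀ (mv (Jh (mv Φ (xr t)))ᵀ (mv Pbbᵀ c))) + mv Br (u t)) t)
    (θ : ℝ → Evec n) (hθ : ∀ t, θ t = mv Φ (mv Φᵀ (x t)) - mv Φ (xr t))
    (ρ : ℝ → Evec n) (hρ : ∀ t, ρ t = x t - mv Φ (mv Φᵀ (x t)))
    (ζ : ℝ → Evec n) (hζ : ∀ t, ζ t = x' t - dfun t)
    (η : ℝ → Evec r)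
    (hη : ∀ t, η t = mv Φᵀ (dfun t) - mv Dr (mv Φᵀ (gH (x t))) - mv Br (u t))
    (ξ : ℝ → Matrix (Fin d) (Fin r) ℝ)
    (hξ : ∀ t, ξ t = (1 - Pbb) * Jh (mv Φ (mv Φᵀ (x t))) * Φ)
    (C₁ C₂ C₃ : ℝ)
    (hC₁ : C₁ = logNorm (Φ * Dr * Φᵀ * Q)
      + spec (Dr * Φᵀ) * CLipJ * spec ((Pᵀ * Ψ)⁻¹) * ‖c‖)
    (hC₂ : C₂ = spec (Dr * Φᵀ) * CLipH)
    (hC₃ : C₃ = spec Dr * ‖c‖) :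
    ∀ t ∈ Set.Icc (0 : ℝ) T, θ t ≠ 0 →
      ∃ D : ℝ, HasDerivAt (fun s => ‖θ s‖) D t ∧
        D ≤ C₁ * ‖θ t‖ + C₂ * ‖ρ t‖ + C₃ * spec (ξ t) + ‖ζ t‖ + ‖η t‖ :=
  theta_norm_derivative_bound_general T Φ hΦ Q c Jh gH hgH CLipH hLipH CLipJ hLipJ Ψ P hΨ hP Pbb
    hPbb Dr Br Qr hQrdef x x' hx u dfun xr hxr θ hθ ρ hρ ζ hζ η hη ξ hξ C₁ C₂ C₃ hC₁ hC₂ hC₃
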